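/- The element x₁₃ := a·b·c²·(a² + c²) = a³·b·c² + a·b·c⁴ of S does not lie in the ideal J; that is, π(x₁₃) ≠ 0 in N. -/

import Mathlib

open MvPolynomial

/-- `S = ℤ/2[a,b,c,d] ≅ H^*(BSO(3)²; ℤ/2)` with `a = w₂'`, `b = w₃'`, `c = w₂''`, `d = w₃''`. -/
noncomputable abbrev S : Type := MvPolynomial (Fin 4) (ZMod 2)

noncomputable def a : S := X 0
noncomputable def b : S := X 1
noncomputable def c : S := X 2
noncomputable def d : S := X 3

/-- The ideal `J = (a·d + c·b, b·d² + b²·d)` of relations. -/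
noncomputable def J : Ideal S := Ideal.span {a * d + c * b, b * d ^ 2 + b ^ 2 * d}

/-- `N = S ⧸ J`, the bottom line of the `E_∞`-term. -/
noncomputable abbrev N : Type := S ⧸ J

/-- The quotient map `π : S → N`. -/
noncomputable def π : S →+* N := Ideal.Quotient.mk J

/-! The ideal `J` dies under the specialization `a ↦ 1, b ↦ t, c ↦ 1 + t, d ↦ t + t²` into
`𝔽₂[t] ⧸ (t⁴)`: the first relation goes to `0`, the second to `bd(b + d) = t⁴(1 + t)`, while
`x₁₃` goes to `t³ + t⁵ ≢ 0`. A nilpotent target is unavoidable: in a domain `bd(b + d) = 0` and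
`ad = cb` force `b = 0`, `c = 0` or `a = c`, and each of these kills `x₁₃`. -/

open scoped Polynomial

noncomputable def specialization : S →ₐ[ZMod 2] (ZMod 2)[X] :=
  aeval ![1, Polynomial.X, 1 + Polynomial.X, Polynomial.X + Polynomial.X ^ 2]

lemma specialization_a : specialization a = 1 := aeval_X _ _

lemma specialization_b : specialization b = Polynomial.X := aeval_X _ _

lemma specialization_c : specialization c = 1 + Polynomial.X := aeval_X _ _

lemma specialization_d : specialization d = Polynomial.X + Polynomial.X ^ 2 := aeval_X _ _

lemma specialization_ad_add_cb : specialization (a * d + c * b) = 0 := by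
  simp only [map_add, map_mul, specialization_a, specialization_b, specialization_c,
    specialization_d]
  ring_nf
  reduce_mod_char

lemma specialization_bd_sq_add_b_sq_d :
    specialization (b * d ^ 2 + b ^ 2 * d) = Polynomial.X ^ 4 * (1 + Polynomial.X) := by
  simp only [map_add, map_mul, map_pow, specialization_b, specialization_d]
  ring_nf
  reduce_mod_char

lemma specialization_x13 :
    specialization (a * b * c ^ 2 * (a ^ 2 + c ^ 2)) = Polynomial.X ^ 3 + Polynomial.X ^ 5 := by
  simp only [map_add, map_mul, map_pow, specialization_a, specialization_b, specialization_c]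
  ring_nf
  reduce_mod_char

lemma J_le_comap_specialization :
    J ≤ (Ideal.span {Polynomial.X ^ 4}).comap specialization := by
  rw [J, Ideal.span_le]
  rintro r (rfl | rfl) <;> rw [SetLike.mem_coe, Ideal.mem_comap, Ideal.mem_span_singleton]
  · rw [specialization_ad_add_cb]
    exact dvd_zero _
  · rw [specialization_bd_sq_add_b_sq_d]
    exact dvd_mul_right _ _

lemma Polynomial.not_X_pow_four_dvd_X_pow_three_add_X_pow_five {R : Type*} [Semiring R]
    [Nontrivial R] : ¬ (X : R[X]) ^ 4 ∣ X ^ 3 + X ^ 5 := by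
  rw [X_pow_dvd_iff]
  intro h
  simpa [coeff_X_pow] using h 3 (by norm_num)

theorem stmt_13 : a * b * c ^ 2 * (a ^ 2 + c ^ 2) ∉ J := by
  intro hJ
  have h := J_le_comap_specialization hJ
  rw [Ideal.mem_comap, specialization_x13, Ideal.mem_span_singleton] at h
  exact Polynomial.not_X_pow_four_dvd_X_pow_three_add_X_pow_five h
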